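/- arXiv:cs/0404036 — 7 statements merged into one kernel-verified Lean document; each statement's English description precedes it below -/
import Mathlib

section
/- Let 0 < δ < 1 and let (x_i)_{i≥1} be a sequence of real numbers satisfying x_1 = 1 − δ and, for every i ≥ 1, x_{i+1} ≤ (1 − δ)·(1 + ∑_{j=1}^{i} x_j) − i. Then x_n ≤ (1 − δ)^n holds for every n ≥ 1. -/
theorem stmt_0 (δ : ℝ) (hδ0 : 0 < δ) (hδ1 : δ < 1) (x : ℕ → ℝ)
    (hx1 : x 1 = 1 - δ)
    (hrec : ∀ i : ℕ, 1 ≤ i →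
      x (i + 1) ≤ (1 - δ) * (1 + ∑ j ∈ Finset.Icc 1 i, x j) - i) :
    ∀ n : ℕ, 1 ≤ n → x n ≤ (1 - δ) ^ n := by
  set a : ℝ := 1 - δ with ha
  have ha0 : 0 < a := by simp [ha]; linarith
  have key : ∀ n : ℕ, 1 ≤ n →
      x n ≤ a ^ n ∧ δ * ∑ j ∈ Finset.Icc 1 n, x j ≤ a - a ^ (n + 1) := by
    intro n hn
    induction n, hn using Nat.le_induction with
    | base =>
      constructor
      · simp [hx1, ha]
      · simp [hx1, ha]; nlinarith
    | succ n hn ih =>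
      obtain ⟨h1, h2⟩ := ih
      have hrecn := hrec n hn
      have bern := one_add_mul_le_pow (show (-2:ℝ) ≤ -δ by linarith) (n+1)
      push_cast at bern
      have hpow : 1 - (n + 1 : ℝ) * δ ≤ a ^ (n + 1) := by
        have : (1 : ℝ) + (-δ) = a := by ring
        rw [this] at bern
        linarith
      have hx : δ * x (n + 1) ≤ δ * a ^ (n + 1) := by
        have h3 : δ * x (n + 1) ≤ δ * (a * (1 + ∑ j ∈ Finset.Icc 1 n, x j) - n) :=
          mul_le_mul_of_nonneg_left hrecn hδ0.le
        have h4 : a * (δ * ∑ j ∈ Finset.Icc 1 n, x j) ≤ a * (a - a ^ (n + 1)) := by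
          nlinarith
        have hpow2 : a * a ^ (n + 1) = a ^ (n + 2) := by ring
        nlinarith [pow_pos ha0 (n + 1)]
      have hx' : x (n + 1) ≤ a ^ (n + 1) := le_of_mul_le_mul_left hx hδ0
      constructor
      · exact hx'
      · rw [Finset.sum_Icc_succ_top (by omega : 1 ≤ n + 1)]
        have : a ^ (n + 1 + 1) = a ^ (n + 1) * a := by ring
        nlinarith
  intro n hn
  exact (key n hn).1
end

section
/- Let 0 < δ < 1 and let (x_i)_{i≥1} be a sequence of real numbers satisfying x_1 = 1 − δ and, for every i ≥ 1, x_{i+1} ≤ (1 − δ)·(1 + ∑_{j=1}^{i} x_j) − i. Then for every n ≥ 1 one has ∑_{j=1}^{n} x_j ≤ (1 − δ)·(1 − (1−δ)^n)/δ < 1/δ; in particular the total distance traveled never reaches 1/δ. -/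
theorem stmt_1 (δ : ℝ) (hδ0 : 0 < δ) (hδ1 : δ < 1) (x : ℕ → ℝ)
    (hx1 : x 1 = 1 - δ)
    (hrec : ∀ i : ℕ, 1 ≤ i →
      x (i + 1) ≤ (1 - δ) * (1 + ∑ j ∈ Finset.Icc 1 i, x j) - i) :
    ∀ n : ℕ, 1 ≤ n →
      (∑ j ∈ Finset.Icc 1 n, x j) ≤ (1 - δ) * (1 - (1 - δ) ^ n) / δ ∧
      (1 - δ) * (1 - (1 - δ) ^ n) / δ < 1 / δ := by
  have ha0 : (0:ℝ) < 1 - δ := by linarith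
  have hsecond : ∀ n : ℕ, (1 - δ) * (1 - (1 - δ) ^ n) / δ < 1 / δ := by
    intro n
    have hp : (0:ℝ) < (1 - δ) ^ n := pow_pos ha0 n
    have hlt : (1 - δ) * (1 - (1 - δ) ^ n) < 1 := by nlinarith
    exact div_lt_div_of_pos_right hlt hδ0
  have hmain : ∀ n : ℕ, 1 ≤ n →
      (∑ j ∈ Finset.Icc 1 n, x j) ≤ (1 - δ) * (1 - (1 - δ) ^ n) / δ := by
    intro n hn
    induction n, hn using Nat.le_induction with
    | base =>
      simp [hx1]
      rw [mul_div_assoc, div_self (ne_of_gt hδ0)]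
      linarith
    | succ n hn ih =>
      rw [Finset.sum_Icc_succ_top (by omega : 1 ≤ n + 1)]
      have hx := hrec n hn
      have hb : 1 + (n:ℝ) * (-δ) ≤ (1 + (-δ)) ^ n := one_add_mul_le_pow (by linarith) n
      have hb' : 1 - (n:ℝ) * δ ≤ (1 - δ) ^ n := by
        have h : (1 + (-δ) : ℝ) = 1 - δ := by ring
        rw [h] at hb; linarith
      have hP1 : (1 - δ) ^ n < 1 := pow_lt_one₀ ha0.le (by linarith) (by omega)
      have h1 : (1 - δ) * (1 - (1 - δ) ^ n) / δ ≤ n := by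
        rw [div_le_iff₀ hδ0]
        nlinarith [mul_pos hδ0 (sub_pos.mpr hP1)]
      have hFid : (1 - δ) * (1 - (1 - δ) ^ (n + 1)) / δ
          = (1 - δ) * ((1 - δ) * (1 - (1 - δ) ^ n) / δ) + (1 - δ) := by
        field_simp
        ring
      have h2 := mul_le_mul_of_nonneg_left ih (show (0:ℝ) ≤ 2 - δ by linarith)
      linarith
  intro n hn
  exact ⟨hmain n hn, hsecond n⟩
end

section
/- Let 0 < ε ≤ 2 and let (x_n)_{n≥1} and (d_n)_{n≥1} be sequences of real numbers such that x_1 = 1 + ε, d_1 = x_1, x_n = (2 + ε)·(1 + d_{n−1}) − n − ∑_{i=1}^{n−1} x_i for all n ≥ 2, and d_{n−1} ≥ (∑_{i=1}^{n−1} x_i) − ε² for all n ≥ 3. Then x_n ≥ 1 + (2^n − 1)·ε for every n ≥ 1. -/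
lemma stmt_6_sum_aux (ε : ℝ) (m : ℕ) :
    ∑ i ∈ Finset.Icc 1 m, (1 + ((2:ℝ)^i - 1) * ε)
      = m + ((2:ℝ)^(m+1) - 2 - m) * ε := by
  induction m with
  | zero => simp
  | succ k ih =>
    rw [Finset.sum_Icc_succ_top (by omega : 1 ≤ k + 1), ih]
    push_cast
    ring

lemma stmt_6_pow_aux (n : ℕ) (hn : 3 ≤ n) : (n : ℝ) + 5 ≤ 2 ^ n := by
  have : n + 5 ≤ 2 ^ n := by
    induction n with
    | zero => omega
    | succ k ih =>
      rcases Nat.lt_or_ge k 3 with h | h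
      · interval_cases k <;> simp_all <;> omega
      · have := ih (by omega)
        have h2 : 2 ^ (k+1) = 2 * 2 ^ k := by ring
        omega
  exact_mod_cast this

theorem stmt_6 (ε : ℝ) (hε0 : 0 < ε) (hε2 : ε ≤ 2) (x dist : ℕ → ℝ)
    (hx1 : x 1 = 1 + ε)
    (hd1 : dist 1 = x 1)
    (hrec : ∀ n : ℕ, 2 ≤ n →
      x n = (2 + ε) * (1 + dist (n - 1)) - n - ∑ i ∈ Finset.Icc 1 (n - 1), x i)
    (hdist : ∀ n : ℕ, 3 ≤ n →
      dist (n - 1) ≥ (∑ i ∈ Finset.Icc 1 (n - 1), x i) - ε ^ 2) :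
    ∀ n : ℕ, 1 ≤ n → x n ≥ 1 + (2 ^ n - 1) * ε := by
  intro n
  induction n using Nat.strong_induction_on with
  | _ n ih =>
    intro hn
    rcases Nat.lt_or_ge n 3 with h3 | h3
    · interval_cases n
      · rw [hx1]; norm_num
      · have hx2 := hrec 2 (by norm_num)
        simp only [show (2:ℕ) - 1 = 1 from rfl, Finset.Icc_self,
          Finset.sum_singleton] at hx2
        rw [hx2, hd1, hx1]
        norm_num
        nlinarith [sq_nonneg ε]
    · -- n ≥ 3
      have hm1 : 1 ≤ n - 1 := by omega
      have hsub : n - 1 + 1 = n := by omega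
      have hsum : ∑ i ∈ Finset.Icc 1 (n-1), x i
          ≥ ∑ i ∈ Finset.Icc 1 (n-1), (1 + ((2:ℝ)^i - 1) * ε) := by
        apply Finset.sum_le_sum
        intro i hi
        simp only [Finset.mem_Icc] at hi
        exact ih i (by omega) hi.1
      rw [stmt_6_sum_aux, hsub] at hsum
      have hd := hdist n h3
      have hx := hrec n (by omega)
      have hpow := stmt_6_pow_aux n h3
      have hcast : ((n - 1 : ℕ) : ℝ) = (n : ℝ) - 1 := by
        rw [Nat.cast_sub (show 1 ≤ n by omega)]; norm_num
      rw [hcast] at hsum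
      set S := ∑ i ∈ Finset.Icc 1 (n-1), x i with hS
      have hA : S ≥ (n : ℝ) - 1 + ((2:ℝ)^n - 2 - ((n:ℝ) - 1)) * ε := hsum
      nlinarith [mul_nonneg (mul_nonneg hε0.le hε0.le)
          (by nlinarith : (2:ℝ)^n - (n:ℝ) - 3 - ε ≥ 0),
        mul_nonneg hε0.le (by linarith : S - ((n : ℝ) - 1 + ((2:ℝ)^n - 2 - ((n:ℝ) - 1)) * ε) ≥ 0),
        mul_nonneg (by linarith : (0:ℝ) ≤ 2 + ε) (by linarith : dist (n-1) - (S - ε^2) ≥ 0)]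
end

section
/- For every ε ∈ (0, 2] and every natural number N there exists d₀ > 0 such that for every d ≥ d₀, the circle-strategy step lengths for target ratio c = 2 + ε satisfy x_n ≥ 1 + (2^n − 1)·ε for all 1 ≤ n ≤ N. -/
/-- Auxiliary recursion for the circle strategy with target ratio `c` on a
semicircle of diameter `d`.  The value at `n` is the triple
`(xₙ, Sₙ, Aₙ)` where `xₙ` is the `n`-th step length,
`Sₙ = ∑_{j=1}^{n} xⱼ` is the total path length after `n` steps, and
`Aₙ = ∑_{j=1}^{n} arcsin (xⱼ / d)` is the accumulated angle, so that
`d · sin Aₙ` is the chord from the start to the `n`-th scan point.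
The recursion is `x_{n+1} = c·(1 + d·sin Aₙ) − (n+1) − Sₙ` (and `x₁ = c − 1`). -/
noncomputable def circleAux (c d : ℝ) : ℕ → ℝ × ℝ × ℝ
  | 0 => (0, 0, 0)
  | n + 1 =>
    let p := circleAux c d n
    let x := c * (1 + d * Real.sin p.2.2) - ((n : ℝ) + 1) - p.2.1
    (x, p.2.1 + x, p.2.2 + Real.arcsin (x / d))

/-- The `n`-th step length `xₙ` of the circle strategy. -/
noncomputable def circleStep (c d : ℝ) (n : ℕ) : ℝ := (circleAux c d n).1

lemma my_arcsin_ge {y : ℝ} (h0 : 0 ≤ y) (h1 : y ≤ 1) : y ≤ Real.arcsin y := by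
  calc y = Real.sin (Real.arcsin y) := (Real.sin_arcsin (by linarith) h1).symm
    _ ≤ Real.arcsin y := Real.sin_le (Real.arcsin_nonneg.2 h0)

lemma my_arcsin_le {y : ℝ} (h0 : 0 ≤ y) (h1 : y ≤ 1/2) : Real.arcsin y ≤ 2 * y := by
  have hsin1 : (1:ℝ) - 1^3/4 < Real.sin 1 := by
    have := Real.sin_gt_sub_cube (x := 1) one_pos; norm_num at this ⊢; linarith
  have ht1 : Real.arcsin y ≤ 1 := by
    calc Real.arcsin y ≤ Real.arcsin (Real.sin 1) :=
          Real.monotone_arcsin (by norm_num at hsin1 ⊢; linarith)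
      _ = 1 := Real.arcsin_sin (by linarith [Real.pi_gt_three]) (by linarith [Real.pi_gt_three])
  rcases eq_or_lt_of_le h0 with h | h
  · simp [← h]
  · have ht0 : 0 < Real.arcsin y := Real.arcsin_pos.2 h
    have := Real.sin_gt_sub_cube ht0
    rw [Real.sin_arcsin (by linarith) (by linarith)] at this
    have hsq : Real.arcsin y ^ 2 ≤ 1 := by nlinarith
    have hcube : Real.arcsin y ^ 3 ≤ Real.arcsin y := by nlinarith
    linarith

lemma my_two_pow (n : ℕ) : (n : ℝ) + 1 ≤ 2 ^ n := by
  exact_mod_cast Nat.succ_le_of_lt (Nat.lt_two_pow_self (n := n))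

lemma circleAux_succ (c d : ℝ) (n : ℕ) :
    circleAux c d (n+1) =
      (c * (1 + d * Real.sin (circleAux c d n).2.2) - ((n:ℝ)+1) - (circleAux c d n).2.1,
       (circleAux c d n).2.1 +
         (c * (1 + d * Real.sin (circleAux c d n).2.2) - ((n:ℝ)+1) - (circleAux c d n).2.1),
       (circleAux c d n).2.2 + Real.arcsin
         ((c * (1 + d * Real.sin (circleAux c d n).2.2) - ((n:ℝ)+1) - (circleAux c d n).2.1) / d)) :=
  rfl

set_option maxHeartbeats 1000000 in
theorem stmt_8 (ε : ℝ) (hε0 : 0 < ε) (hε2 : ε ≤ 2) (N : ℕ) :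
    ∃ d₀ : ℝ, 0 < d₀ ∧ ∀ d : ℝ, d₀ ≤ d → ∀ n : ℕ, 1 ≤ n → n ≤ N →
      circleStep (2 + ε) d n ≥ 1 + (2 ^ n - 1) * ε := by
  set K : ℝ := 9 ^ (N + 1) with hKdef
  have hK1 : (1:ℝ) ≤ K := one_le_pow₀ (by norm_num)
  have hK0 : (0:ℝ) < K := by linarith
  refine ⟨max (16 * K) ((2 + ε) * K ^ 3 / ε ^ 2), by positivity, ?_⟩
  intro d hd
  have hd2K : 16 * K ≤ d := le_trans (le_max_left _ _) hd
  have hderr : (2 + ε) * K ^ 3 / ε ^ 2 ≤ d := le_trans (le_max_right _ _) hd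
  have hd1 : (1:ℝ) ≤ d := by linarith
  have hd0 : (0:ℝ) < d := by linarith
  have hε2pos : (0:ℝ) < ε ^ 2 := by positivity
  have herrG : (2 + ε) * K ^ 3 ≤ ε ^ 2 * d ^ 2 := by
    have h1 : (2 + ε) * K ^ 3 ≤ d * ε ^ 2 := (div_le_iff₀ hε2pos).1 hderr
    have hdd : d ≤ d ^ 2 := by nlinarith
    nlinarith [mul_le_mul_of_nonneg_left hdd (le_of_lt hε2pos)]
  -- main induction
  have main : ∀ n : ℕ, n ≤ N →
      (1 ≤ n → 1 + (2 ^ n - 1) * ε ≤ (circleAux (2 + ε) d n).1) ∧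
      ((n : ℝ) + (2 ^ (n + 1) - 2 - n) * ε ≤ (circleAux (2 + ε) d n).2.1) ∧
      ((circleAux (2 + ε) d n).2.1 ≤ 9 ^ (n + 1) - 1) ∧
      ((circleAux (2 + ε) d n).2.1 / d ≤ (circleAux (2 + ε) d n).2.2) ∧
      ((circleAux (2 + ε) d n).2.2 ≤ 2 * (circleAux (2 + ε) d n).2.1 / d) := by
    intro n
    induction n with
    | zero => simp [circleAux]
    | succ n ih =>
      intro hn1N
      obtain ⟨ihx, ihSlo, ihShi, ihAlo, ihAhi⟩ := ih (Nat.le_of_succ_le hn1N)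
      set S : ℝ := (circleAux (2 + ε) d n).2.1 with hSdef
      set A : ℝ := (circleAux (2 + ε) d n).2.2 with hAdef
      -- basic facts
      have hm0 : (0:ℝ) ≤ 2 ^ (n + 1) - 2 - n := by
        have := my_two_pow (n + 1)
        push_cast at this ⊢
        linarith
      have hS0 : 0 ≤ S := by
        have hp : (0:ℝ) ≤ (2 ^ (n + 1) - 2 - (n:ℝ)) * ε := mul_nonneg hm0 (le_of_lt hε0)
        have : (0:ℝ) ≤ (n:ℝ) := Nat.cast_nonneg n
        linarith
      have hSK : S ≤ K - 1 := by
        have : (9:ℝ) ^ (n + 1) ≤ 9 ^ (N + 1) :=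
          pow_le_pow_right₀ (by norm_num) (by omega)
        linarith
      have hA0 : 0 ≤ A := le_trans (by positivity) ihAlo
      have hA1 : A ≤ 1 := by
        have h1 : 2 * S / d ≤ 1 := by
          rw [div_le_one hd0]; linarith
        linarith
      have hApi : A ≤ Real.pi / 2 := by linarith [Real.pi_gt_three]
      -- chord lower bound
      have hchord : S - S ^ 3 / (4 * d ^ 2) ≤ d * Real.sin A := by
        rcases Nat.eq_zero_or_pos n with rfl | hn1
        · have hS : S = 0 := by rw [hSdef]; simp [circleAux]
          have hA : A = 0 := by rw [hAdef]; simp [circleAux]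
          rw [hS, hA]
          simp
        · have hS1 : 1 ≤ S := by
            have h1 : (1:ℝ) ≤ (n:ℝ) := by exact_mod_cast hn1
            have hp : (0:ℝ) ≤ (2 ^ (n + 1) - 2 - (n:ℝ)) * ε := mul_nonneg hm0 (le_of_lt hε0)
            linarith
          have hSd_pos : 0 < S / d := by positivity
          have hSd_half : S / d ≤ 1 / 2 := by
            rw [div_le_iff₀ hd0]; linarith
          have hcube : S / d - (S / d) ^ 3 / 4 < Real.sin (S / d) := by
            have := Real.sin_gt_sub_cube hSd_pos; linarith [pow_pos hSd_pos 3]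
          have hmono : Real.sin (S / d) ≤ Real.sin A :=
            Real.sin_le_sin_of_le_of_le_pi_div_two (by linarith [Real.pi_gt_three]) hApi ihAlo
          have hcalc : d * (S / d - (S / d) ^ 3 / 4) = S - S ^ 3 / (4 * d ^ 2) := by
            field_simp
          have r1 := mul_le_mul_of_nonneg_left hmono (le_of_lt hd0)
          have r2 := mul_lt_mul_of_pos_left hcube hd0
          linarith
      -- the new step value
      set x : ℝ := (2 + ε) * (1 + d * Real.sin A) - ((n:ℝ) + 1) - S with hxdef
      have hx_eq : (circleAux (2 + ε) d (n+1)).1 = x := by rw [circleAux_succ]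
      have hS_eq : (circleAux (2 + ε) d (n+1)).2.1 = S + x := by rw [circleAux_succ]
      have hA_eq : (circleAux (2 + ε) d (n+1)).2.2 = A + Real.arcsin (x / d) := by
        rw [circleAux_succ]
      -- error bound
      have herr4 : (2 + ε) * (S ^ 3 / (4 * d ^ 2)) ≤ ε ^ 2 / 4 := by
        have hS3 : S ^ 3 ≤ K ^ 3 := pow_le_pow_left₀ hS0 (by linarith) 3
        have key : (2 + ε) * S ^ 3 ≤ ε ^ 2 * d ^ 2 := by
          have := mul_le_mul_of_nonneg_left hS3 (show (0:ℝ) ≤ 2 + ε by linarith)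
          linarith
        rw [mul_div_assoc', div_le_div_iff₀ (by positivity) (by norm_num : (0:ℝ) < 4)]
        linarith
      -- lower bound on x
      have hx_low : 1 + (2 ^ (n + 1) - 1) * ε ≤ x := by
        rcases Nat.eq_zero_or_pos n with rfl | hn1
        · have hS : S = 0 := by rw [hSdef]; simp [circleAux]
          have hA : A = 0 := by rw [hAdef]; simp [circleAux]
          rw [hxdef, hS, hA]
          norm_num
          linarith
        · have hm1 : (1:ℝ) ≤ 2 ^ (n + 1) - 2 - n := by
            have h2 : (2:ℝ) ^ (n + 1) = 2 * 2 ^ n := by ring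
            have hn1' : (1:ℝ) ≤ (n:ℝ) := by exact_mod_cast hn1
            linarith [my_two_pow n]
          have p1 : ε * ((n:ℝ) + (2 ^ (n + 1) - 2 - n) * ε) ≤ ε * S :=
            mul_le_mul_of_nonneg_left ihSlo (le_of_lt hε0)
          have p2 : (2 + ε) * (S - S ^ 3 / (4 * d ^ 2)) ≤ (2 + ε) * (d * Real.sin A) :=
            mul_le_mul_of_nonneg_left hchord (by linarith)
          have p3 : ε ^ 2 ≤ ε ^ 2 * (2 ^ (n + 1) - 2 - n) :=
            le_mul_of_one_le_right (sq_nonneg ε) hm1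
          rw [hxdef]
          nlinarith [p1, p2, p3, herr4, ihSlo]
      -- upper bound on x
      have hsin0 : 0 ≤ Real.sin A :=
        Real.sin_nonneg_of_nonneg_of_le_pi hA0 (by linarith [Real.pi_gt_three])
      have hx_up : x ≤ 8 * S + 4 := by
        have hsinA : Real.sin A ≤ A := Real.sin_le hA0
        have hsA : d * Real.sin A ≤ d * A :=
          mul_le_mul_of_nonneg_left hsinA (le_of_lt hd0)
        have hdA : d * A ≤ 2 * S := by
          have := (le_div_iff₀ hd0).1 ihAhi
          linarith
        have q1 : ε * (d * Real.sin A) ≤ 2 * (d * Real.sin A) := by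
          have := mul_nonneg (show (0:ℝ) ≤ 2 - ε by linarith)
            (mul_nonneg (le_of_lt hd0) hsin0)
          nlinarith
        have hn0 : (0:ℝ) ≤ (n:ℝ) := Nat.cast_nonneg n
        rw [hxdef]
        nlinarith [q1, hsA, hdA, hS0, hn0]
      have hx0 : 0 ≤ x := by
        have h1 : (0:ℝ) ≤ (2 ^ (n + 1) - 1) * ε := by
          have := my_two_pow (n + 1)
          have h2 : (0:ℝ) ≤ 2 ^ (n + 1) - 1 := by push_cast at this ⊢; linarith
          exact mul_nonneg h2 (le_of_lt hε0)
        linarith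
      have hxK : x ≤ 8 * K - 4 := by linarith
      -- conclude the five conjuncts
      refine ⟨fun _ => by rw [hx_eq]; exact hx_low, ?_, ?_, ?_, ?_⟩
      · rw [hS_eq]
        have e1 : ((2:ℝ) ^ (n + 1 + 1) - 2 - ((n:ℝ) + 1)) * ε
            = (2 ^ (n + 1) - 2 - (n:ℝ)) * ε + (2 ^ (n + 1) - 1) * ε := by ring
        push_cast at e1 ⊢
        linarith
      · rw [hS_eq]
        have h9 : (9:ℝ) ^ (n + 1 + 1) = 9 * 9 ^ (n + 1) := by ring
        linarith
      · rw [hS_eq, hA_eq]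
        have hxd1 : x / d ≤ 1 := by rw [div_le_one hd0]; linarith
        have := my_arcsin_ge (by positivity) hxd1
        have hsplit : (S + x) / d = S / d + x / d := add_div S x d
        linarith
      · rw [hS_eq, hA_eq]
        have hxd_half : x / d ≤ 1 / 2 := by
          rw [div_le_iff₀ hd0]; linarith
        have := my_arcsin_le (by positivity) hxd_half
        have hsplit : 2 * (S + x) / d = 2 * S / d + 2 * (x / d) := by ring
        linarith
  intro n hn1 hnN
  exact (main n hnN).1 hn1
end

section
/- Let ε > 0 and let N be an even natural number with (2^{N/2} − 1)·ε ≥ 9. If (x_i)_{i≥1} is a sequence of nonnegative real numbers with x_n ≥ 1 + (2^n − 1)·ε for all n with N/2 ≤ n ≤ N − 1, then ∑_{i=1}^{N−1} x_i ≥ 5N; that is, the average of the first N−1 step lengths is at least 5·N/(N−1) ≥ 5. -/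
theorem stmt_9 (ε : ℝ) (hε : 0 < ε) (N : ℕ) (hNeven : Even N)
    (hbig : (2 ^ (N / 2) - 1 : ℝ) * ε ≥ 9) (x : ℕ → ℝ)
    (hx0 : ∀ i : ℕ, 0 ≤ x i)
    (hx : ∀ n : ℕ, N / 2 ≤ n → n ≤ N - 1 → x n ≥ 1 + (2 ^ n - 1) * ε) :
    (∑ i ∈ Finset.Icc 1 (N - 1), x i) ≥ 5 * N := by
  obtain ⟨k, hk⟩ := hNeven
  have hN2 : 0 < N := by
    by_contra h
    push_neg at h
    interval_cases N
    norm_num at hbig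
  have hNhalf : 1 ≤ N / 2 := by omega
  have hsub : Finset.Icc (N / 2) (N - 1) ⊆ Finset.Icc 1 (N - 1) := by
    intro i hi
    simp only [Finset.mem_Icc] at *
    omega
  have hstep : ∀ n ∈ Finset.Icc (N / 2) (N - 1), (10 : ℝ) ≤ x n := by
    intro n hn
    simp only [Finset.mem_Icc] at hn
    have h1 := hx n hn.1 hn.2
    have h2 : (2 : ℝ) ^ (N / 2) ≤ 2 ^ n :=
      pow_le_pow_right₀ (by norm_num) hn.1
    have h3 : (9 : ℝ) ≤ (2 ^ n - 1) * ε := by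
      calc (9 : ℝ) ≤ (2 ^ (N / 2) - 1) * ε := hbig
        _ ≤ (2 ^ n - 1) * ε := by
            apply mul_le_mul_of_nonneg_right _ hε.le
            linarith
    linarith
  have hcard : (Finset.Icc (N / 2) (N - 1)).card = N / 2 := by
    rw [Nat.card_Icc]
    omega
  calc (∑ i ∈ Finset.Icc 1 (N - 1), x i)
      ≥ ∑ i ∈ Finset.Icc (N / 2) (N - 1), x i :=
        Finset.sum_le_sum_of_subset_of_nonneg hsub (fun i _ _ => hx0 i)
    _ ≥ ∑ i ∈ Finset.Icc (N / 2) (N - 1), (10 : ℝ) :=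
        Finset.sum_le_sum hstep
    _ = 10 * (N / 2 : ℕ) := by
        rw [Finset.sum_const, hcard, nsmul_eq_mul, mul_comm]
    _ ≥ 5 * N := by
        have : (N / 2 : ℕ) * 2 = N := by omega
        have h : ((N / 2 : ℕ) : ℝ) * 2 = N := by exact_mod_cast congrArg Nat.cast this
        linarith
end

section
/- Let ε > 0 and let N ≥ 12 be a natural number. Suppose (x_n)_{n≥1} and (d_n)_{n≥1} are sequences of real numbers with x_i ≥ 0 for all i, with ∑_{i=1}^{N−1} x_i ≥ 5N, and such that for every n ≥ N one has x_n = (2 + ε)·(1 + d_{n−1}) − n − ∑_{i=1}^{n−1} x_i and d_{n−1} ≥ (2/π)·∑_{i=1}^{n−1} x_i. Then x_n ≥ 5 for all n ≥ N. -/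
theorem stmt_10 (ε : ℝ) (hε : 0 < ε) (N : ℕ) (hN : 12 ≤ N)
    (x dist : ℕ → ℝ)
    (hx0 : ∀ i : ℕ, 0 ≤ x i)
    (hsum : (∑ i ∈ Finset.Icc 1 (N - 1), x i) ≥ 5 * N)
    (hrec : ∀ n : ℕ, N ≤ n →
      x n = (2 + ε) * (1 + dist (n - 1)) - n - ∑ i ∈ Finset.Icc 1 (n - 1), x i)
    (hdist : ∀ n : ℕ, N ≤ n →
      dist (n - 1) ≥ (2 / Real.pi) * ∑ i ∈ Finset.Icc 1 (n - 1), x i) :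
    ∀ n : ℕ, N ≤ n → x n ≥ 5 := by
  have hπ0 : (0:ℝ) < Real.pi := Real.pi_pos
  have hπ : Real.pi < 3.15 := Real.pi_lt_d2
  -- key step: if the partial sum is ≥ 5n then x n ≥ 5
  have step : ∀ n : ℕ, N ≤ n → (∑ i ∈ Finset.Icc 1 (n - 1), x i) ≥ 5 * n → x n ≥ 5 := by
    intro n hn hS
    have hn12 : (12:ℝ) ≤ (n:ℝ) := by exact_mod_cast le_trans hN hn
    have hd := hdist n hn
    have hS0 : (0:ℝ) ≤ ∑ i ∈ Finset.Icc 1 (n - 1), x i :=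
      Finset.sum_nonneg fun i _ => hx0 i
    set S := ∑ i ∈ Finset.Icc 1 (n - 1), x i with hSdef
    have hd' : Real.pi * dist (n - 1) ≥ 2 * S := by
      have := mul_le_mul_of_nonneg_left hd (le_of_lt hπ0)
      calc Real.pi * dist (n - 1) ≥ Real.pi * ((2 / Real.pi) * S) := this
        _ = 2 * S := by field_simp
    have hd0 : 0 ≤ dist (n - 1) := by
      have : (0:ℝ) ≤ (2 / Real.pi) * S := by positivity
      linarith [hd]
    rw [hrec n hn]
    nlinarith [mul_nonneg (le_of_lt hε) hd0, mul_nonneg hS0 (sub_nonneg.mpr hπ.le),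
      mul_le_mul_of_nonneg_left hn12 (sub_nonneg.mpr hπ.le)]
  -- partial sums grow: by induction, sum up to n-1 is ≥ 5n for n ≥ N
  have key : ∀ n : ℕ, N ≤ n → (∑ i ∈ Finset.Icc 1 (n - 1), x i) ≥ 5 * n := by
    intro n hn
    induction n, hn using Nat.le_induction with
    | base => exact hsum
    | succ n hn ih =>
      have h1 : 1 ≤ n := le_trans (by norm_num) (le_trans hN hn)
      have hsplit : (∑ i ∈ Finset.Icc 1 (n + 1 - 1), x i)
          = (∑ i ∈ Finset.Icc 1 (n - 1), x i) + x n := by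
        simp only [Nat.add_sub_cancel]
        have : n - 1 + 1 = n := Nat.succ_pred_eq_of_pos h1
        rw [← this, Finset.sum_Icc_succ_top (by omega), this]
      have hxn := step n hn ih
      rw [hsplit]
      push_cast
      linarith
  intro n hn
  exact step n hn (key n hn)
end

section
/- Let d > 0, let n be a natural number, and let x_1, ..., x_n be real numbers with 0 ≤ x_j ≤ d for all j and ∑_{j=1}^{n} arcsin(x_j/d) ≤ π/2. Then d·sin(∑_{j=1}^{n} arcsin(x_j/d)) ≥ (2/π)·∑_{j=1}^{n} x_j. -/
theorem stmt_11 (d : ℝ) (hd : 0 < d) (n : ℕ) (x : ℕ → ℝ)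
    (hx : ∀ j ∈ Finset.Icc 1 n, 0 ≤ x j ∧ x j ≤ d)
    (hangle : (∑ j ∈ Finset.Icc 1 n, Real.arcsin (x j / d)) ≤ Real.pi / 2) :
    d * Real.sin (∑ j ∈ Finset.Icc 1 n, Real.arcsin (x j / d)) ≥
      (2 / Real.pi) * ∑ j ∈ Finset.Icc 1 n, x j := by
  set S := ∑ j ∈ Finset.Icc 1 n, Real.arcsin (x j / d) with hS
  have hS0 : 0 ≤ S := Finset.sum_nonneg fun j hj =>
    Real.arcsin_nonneg.2 (div_nonneg (hx j hj).1 hd.le)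
  have hsum : (∑ j ∈ Finset.Icc 1 n, x j) / d ≤ S := by
    rw [Finset.sum_div]
    refine Finset.sum_le_sum fun j hj => ?_
    have h1 : x j / d ≤ 1 := (div_le_one hd).2 (hx j hj).2
    have h0 : 0 ≤ x j / d := div_nonneg (hx j hj).1 hd.le
    nlinarith [Real.sin_le (Real.arcsin_nonneg.2 h0),
      Real.sin_arcsin (by linarith : (-1:ℝ) ≤ x j / d) h1]
  have hj := Real.mul_le_sin hS0 hangle
  have hpi := Real.pi_pos
  have : (2 / Real.pi) * ∑ j ∈ Finset.Icc 1 n, x j ≤ d * (2 / Real.pi * S) := by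
    rw [div_le_iff₀ hd] at hsum
    calc (2 / Real.pi) * ∑ j ∈ Finset.Icc 1 n, x j ≤ (2 / Real.pi) * (S * d) := by
          apply mul_le_mul_of_nonneg_left hsum (by positivity)
      _ = d * (2 / Real.pi * S) := by ring
  exact le_trans this (mul_le_mul_of_nonneg_left hj hd.le)
end
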